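/- Let I ⊆ (0,∞) be a nonempty open interval, let f, g : I → ℝ be differentiable with nowhere vanishing first derivatives, let n ≥ 2, let λ_1,…,λ_n, μ_1,…,μ_n > 0 and α_1,…,α_n, β_1,…,β_n ∈ ℝ, and define p_i(x) := λ_i x^{α_i} and q_i(x) := μ_i x^{β_i} for i ∈ {1,…,n} and x ∈ I. If A_{f,p} is locally smaller than A_{g,q}, then there exist γ > 0 and δ ∈ ℝ such that μ_i = γ λ_i and β_i = α_i + δ for all i ∈ {1,…,n}. -/

import Mathlib

/-! On the diagonal both means take the value `x`, so along the `i`-th coordinate line through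
`(x, …, x)` the difference `A_{g,q} - A_{f,p}` has a local minimum and the two partial
derivatives agree. Differentiating `f ∘ A_{f,p} = (∑ pⱼ f) / ∑ pⱼ` there gives
`∂ᵢA_{f,p}(x, …, x) = pᵢ(x) / ∑ⱼ pⱼ(x)` (the derivatives of the weights cancel), so `qᵢ / pᵢ`
does not depend on `i`. For power weights this reads `λᵢ μₖ x^(αᵢ + βₖ) = λₖ μᵢ x^(αₖ + βᵢ)`
on `I`, and comparing two points of `I` forces equal exponents and equal coefficients. -/

open Set Function Real

/-- The `n`-variable generalized Bajraktarević mean `A_{f,p}` on the interval `I`: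
`A_{f,p}(x) = f⁻¹((∑ pᵢ(xᵢ) f(xᵢ)) / (∑ pᵢ(xᵢ)))`. -/
noncomputable def bajMean {n : ℕ} (I : Set ℝ) (f : ℝ → ℝ) (p : Fin n → ℝ → ℝ)
    (x : Fin n → ℝ) : ℝ :=
  Function.invFunOn f I ((∑ i, p i (x i) * f (x i)) / (∑ i, p i (x i)))

/-- The `i`-th first-order partial derivative of `Φ : Iⁿ → ℝ`. -/
noncomputable def pder {n : ℕ} (Φ : (Fin n → ℝ) → ℝ) (i : Fin n) (y : Fin n → ℝ) : ℝ :=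
  deriv (fun t => Φ (Function.update y i t)) (y i)

/-- The second-order partial derivative `∂ᵢ∂ⱼΦ`. -/
noncomputable def pder2 {n : ℕ} (Φ : (Fin n → ℝ) → ℝ) (i j : Fin n) :
    (Fin n → ℝ) → ℝ :=
  pder (pder Φ j) i

/-- `M` is locally smaller than `N`: there is an open set `U ⊆ Iⁿ` containing the
diagonal of `Iⁿ` on which `M ≤ N`. -/
def LocallySmaller {n : ℕ} (I : Set ℝ) (M N : (Fin n → ℝ) → ℝ) : Prop :=
  ∃ U : Set (Fin n → ℝ), IsOpen U ∧ U ⊆ {x | ∀ i, x i ∈ I} ∧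
    (∀ x ∈ I, (fun _ => x) ∈ U) ∧ ∀ x ∈ U, M x ≤ N x

open Filter Topology

lemma injOn_of_hasDerivAt_ne_zero {I : Set ℝ} (hI : I.OrdConnected) {f f' : ℝ → ℝ}
    (hf : ∀ x ∈ I, HasDerivAt f (f' x) x) (hf' : ∀ x ∈ I, f' x ≠ 0) : InjOn f I := by
  intro a ha b hb hab
  by_contra hne
  wlog hlt : a < b generalizing a b
  · exact this hb ha hab.symm (Ne.symm hne) ((not_lt.1 hlt).lt_of_ne (Ne.symm hne))
  have hsub : Icc a b ⊆ I := hI.out ha hb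
  obtain ⟨c, hc, hc0⟩ := exists_hasDerivAt_eq_zero hlt
    (fun x hx => (hf x (hsub hx)).continuousAt.continuousWithinAt) hab
    (fun x hx => hf x (hsub (Ioo_subset_Icc_self hx)))
  exact hf' c (hsub (Ioo_subset_Icc_self hc)) hc0

section InverseFunction

variable {s : Set ℝ} {f : ℝ → ℝ} {x : ℝ}

lemma image_mem_nhds_of_injOn (hs : s ∈ 𝓝 x)
    (hfc : ContinuousOn f s) (hfi : InjOn f s) : f '' s ∈ 𝓝 (f x) := by
  obtain ⟨l, u, ⟨hlx, hxu⟩, hlu⟩ := mem_nhds_iff_exists_Ioo_subset.1 hs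
  obtain ⟨a, hla, hax⟩ := exists_between hlx
  obtain ⟨b, hxb, hbu⟩ := exists_between hxu
  have hab : Icc a b ⊆ s := fun z hz => hlu ⟨hla.trans_le hz.1, hz.2.trans_lt hbu⟩
  have hx : x ∈ Icc a b := ⟨hax.le, hxb.le⟩
  have hfx : f x ∈ Ioo (min (f a) (f b)) (max (f a) (f b)) := by
    rcases (hfc.mono hab).strictMonoOn_of_injOn_Icc' (hax.trans hxb).le (hfi.mono hab) with h | h
    · exact ⟨min_lt_of_left_lt (h (left_mem_Icc.2 (hax.trans hxb).le) hx hax),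
        lt_max_of_lt_right (h hx (right_mem_Icc.2 (hax.trans hxb).le) hxb)⟩
    · exact ⟨min_lt_of_right_lt (h hx (right_mem_Icc.2 (hax.trans hxb).le) hxb),
        lt_max_of_lt_left (h (left_mem_Icc.2 (hax.trans hxb).le) hx hax)⟩
  have hivt : uIcc (f a) (f b) ⊆ f '' s := by
    rw [← uIcc_of_le (hax.trans hxb).le] at hab
    exact (intermediate_value_uIcc (hfc.mono hab)).trans (image_mono hab)
  exact mem_of_superset (isOpen_Ioo.mem_nhds hfx) (Ioo_subset_Icc_self.trans hivt)

lemma continuousAt_invFunOn (hs : s ∈ 𝓝 x)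
    (hfc : ContinuousOn f s) (hfi : InjOn f s) : ContinuousAt (invFunOn f s) (f x) := by
  rw [ContinuousAt, hfi.leftInvOn_invFunOn (mem_of_mem_nhds hs)]
  intro V hV
  refine mem_map.2 <| mem_of_superset (image_mem_nhds_of_injOn (inter_mem hV hs)
    (hfc.mono inter_subset_right) (hfi.mono inter_subset_right)) ?_
  rintro _ ⟨z, hz, rfl⟩
  rw [mem_preimage, hfi.leftInvOn_invFunOn hz.2]
  exact hz.1

lemma hasDerivAt_invFunOn {f' : ℝ} (hs : s ∈ 𝓝 x)
    (hfc : ContinuousOn f s) (hfi : InjOn f s) (hf : HasDerivAt f f' x) (hf' : f' ≠ 0) :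
    HasDerivAt (invFunOn f s) f'⁻¹ (f x) := by
  refine HasDerivAt.of_local_left_inverse (continuousAt_invFunOn hs hfc hfi)
    (by rwa [hfi.leftInvOn_invFunOn (mem_of_mem_nhds hs)]) hf' ?_
  filter_upwards [image_mem_nhds_of_injOn hs hfc hfi] with y ⟨z, hz, hzy⟩
  exact invFunOn_eq ⟨z, hz, hzy⟩

end InverseFunction

lemma hasDerivAt_sum_update {ι : Type*} [Fintype ι] [DecidableEq ι] (c : ι → ℝ)
    (h : ι → ℝ → ℝ) (i : ι) {h' t : ℝ} (hd : HasDerivAt (h i) h' t) :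
    HasDerivAt (fun s => ∑ j, h j (update c i s j)) h' t := by
  simp only [apply_update (fun j => h j) c, Finset.sum_update_of_mem (Finset.mem_univ i)]
  exact hd.add_const _

lemma hasDerivAt_weightedAverage_update {ι : Type*} [Fintype ι] [DecidableEq ι]
    {p : ι → ℝ → ℝ} {f : ℝ → ℝ} {f' x : ℝ} (i : ι) (hp : DifferentiableAt ℝ (p i) x)
    (hf : HasDerivAt f f' x) (hsum : ∑ j, p j x ≠ 0) :
    HasDerivAt (fun t => (∑ j, p j (update (fun _ => x) i t j) * f (update (fun _ => x) i t j))
      / ∑ j, p j (update (fun _ => x) i t j)) (p i x * f' / ∑ j, p j x) x := by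
  have hN := hasDerivAt_sum_update (fun _ => x) (fun j y => p j y * f y) i (hp.hasDerivAt.mul hf)
  have hD := hasDerivAt_sum_update (fun _ => x) p i hp.hasDerivAt
  have hx : update (fun _ : ι => x) i x = fun _ => x := update_eq_self i _
  refine (hN.div hD (by rwa [hx])).congr_deriv ?_
  simp only [hx, ← Finset.sum_mul]
  field_simp
  ring

lemma hasDerivAt_update_eq_of_eventually_le {ι : Type*} [DecidableEq ι]
    {M N : (ι → ℝ) → ℝ} {c : ι → ℝ} {i : ι} {a b : ℝ} (hle : ∀ᶠ y in 𝓝 c, M y ≤ N y)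
    (heq : M c = N c) (hM : HasDerivAt (fun t => M (update c i t)) a (c i))
    (hN : HasDerivAt (fun t => N (update c i t)) b (c i)) : a = b := by
  have hmin : IsLocalMin (fun t => N (update c i t) - M (update c i t)) (c i) := by
    have hline := (continuous_const.update i continuous_id).tendsto' (c i) c (update_eq_self i c)
    filter_upwards [hline.eventually hle] with t ht
    simp only [update_eq_self, heq, sub_self, sub_nonneg]
    exact ht
  exact (sub_eq_zero.1 (hmin.hasDerivAt_eq_zero (hN.sub hM))).symm

lemma LocallySmaller.eventually_le {n : ℕ} {I : Set ℝ} {M N : (Fin n → ℝ) → ℝ}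
    (h : LocallySmaller I M N) {x : ℝ} (hx : x ∈ I) : ∀ᶠ y in 𝓝 (fun _ => x), M y ≤ N y := by
  obtain ⟨U, hU, -, hdiag, hle⟩ := h
  exact eventually_of_mem (hU.mem_nhds (hdiag x hx)) hle

section BajMean

variable {n : ℕ} {I : Set ℝ} {f : ℝ → ℝ} {p : Fin n → ℝ → ℝ} {x : ℝ}

lemma bajMean_const (hfi : InjOn f I) (hx : x ∈ I) (hsum : ∑ j, p j x ≠ 0) :
    bajMean I f p (fun _ => x) = x := by
  rw [bajMean, ← Finset.sum_mul, mul_div_cancel_left₀ _ hsum, hfi.leftInvOn_invFunOn hx]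

lemma hasDerivAt_bajMean_update {f' : ℝ} (i : Fin n) (hI : I ∈ 𝓝 x) (hfc : ContinuousOn f I)
    (hfi : InjOn f I) (hf : HasDerivAt f f' x) (hf' : f' ≠ 0) (hp : DifferentiableAt ℝ (p i) x)
    (hsum : ∑ j, p j x ≠ 0) :
    HasDerivAt (fun t => bajMean I f p (update (fun _ => x) i t)) (p i x / ∑ j, p j x) x := by
  have hA := hasDerivAt_weightedAverage_update i hp hf hsum
  have hinv := hasDerivAt_invFunOn hI hfc hfi hf hf'
  have hAx : (∑ j, p j (update (fun _ => x) i x j) * f (update (fun _ => x) i x j))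
      / ∑ j, p j (update (fun _ => x) i x j) = f x := by
    rw [update_eq_self i (fun _ => x), ← Finset.sum_mul, mul_div_cancel_left₀ _ hsum]
  rw [← hAx] at hinv
  exact (hinv.comp x hA).congr_deriv (by field_simp)

end BajMean

theorem LocallySmaller.weight_div_sum_eq {n : ℕ} {I : Set ℝ} (hIopen : IsOpen I)
    (hIconn : I.OrdConnected) {f f' g g' : ℝ → ℝ} {p q : Fin n → ℝ → ℝ}
    (hf : ∀ x ∈ I, HasDerivAt f (f' x) x) (hf' : ∀ x ∈ I, f' x ≠ 0)
    (hg : ∀ x ∈ I, HasDerivAt g (g' x) x) (hg' : ∀ x ∈ I, g' x ≠ 0)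
    (hp : ∀ i, ∀ x ∈ I, DifferentiableAt ℝ (p i) x) (hq : ∀ i, ∀ x ∈ I, DifferentiableAt ℝ (q i) x)
    (hpsum : ∀ x ∈ I, ∑ j, p j x ≠ 0) (hqsum : ∀ x ∈ I, ∑ j, q j x ≠ 0)
    (hloc : LocallySmaller I (bajMean I f p) (bajMean I g q)) {x : ℝ} (hx : x ∈ I) (i : Fin n) :
    p i x / ∑ j, p j x = q i x / ∑ j, q j x := by
  have hfi := injOn_of_hasDerivAt_ne_zero hIconn hf hf'
  have hgi := injOn_of_hasDerivAt_ne_zero hIconn hg hg'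
  have hfc : ContinuousOn f I := fun y hy => (hf y hy).continuousAt.continuousWithinAt
  have hgc : ContinuousOn g I := fun y hy => (hg y hy).continuousAt.continuousWithinAt
  exact hasDerivAt_update_eq_of_eventually_le (hloc.eventually_le hx)
    ((bajMean_const hfi hx (hpsum x hx)).trans (bajMean_const hgi hx (hqsum x hx)).symm)
    (hasDerivAt_bajMean_update i (hIopen.mem_nhds hx) hfc hfi (hf x hx) (hf' x hx) (hp i x hx)
      (hpsum x hx))
    (hasDerivAt_bajMean_update i (hIopen.mem_nhds hx) hgc hgi (hg x hx) (hg' x hx) (hq i x hx)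
      (hqsum x hx))

lemma mul_eq_mul_of_div_eq_div_of_div_eq_div {K : Type*} [Field K] {a b c d P Q : K}
    (hP : P ≠ 0) (hQ : Q ≠ 0) (hab : a / P = b / Q) (hcd : c / P = d / Q) : a * d = c * b := by
  rw [div_eq_div_iff hP hQ] at hab hcd
  apply mul_right_cancel₀ hQ
  linear_combination d * hab - b * hcd

lemma eq_and_eq_of_forall_mul_rpow_eq {S : Set ℝ} (hS : S.Nontrivial) (hSpos : S ⊆ Ioi 0)
    {a b c d : ℝ} (hc : c ≠ 0) (h : ∀ x ∈ S, c * x ^ a = d * x ^ b) : a = b ∧ c = d := by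
  obtain ⟨x, hx, y, hy, hxy⟩ := hS
  have hx0 : 0 < x := hSpos hx
  have hy0 : 0 < y := hSpos hy
  have hpow : ∀ z ∈ S, z ^ (a - b) = d / c := fun z hz => by
    have hz0 : 0 < z := hSpos hz
    rw [rpow_sub hz0, div_eq_div_iff (rpow_pos_of_pos hz0 b).ne' hc, mul_comm, h z hz]
  have hab : a = b := by
    by_contra hne
    exact hxy (rpow_left_injOn (sub_ne_zero.2 hne) hx0.le hy0.le
      ((hpow x hx).trans (hpow y hy).symm))
  subst hab
  exact ⟨rfl, mul_right_cancel₀ (rpow_pos_of_pos hx0 a).ne' (h x hx)⟩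

lemma sum_mul_rpow_pos {ι : Type*} [Fintype ι] [Nonempty ι] {c : ι → ℝ} (hc : ∀ i, 0 < c i)
    (e : ι → ℝ) {x : ℝ} (hx : 0 < x) : 0 < ∑ j, c j * x ^ e j :=
  Finset.sum_pos (fun j _ => mul_pos (hc j) (rpow_pos_of_pos hx _)) Finset.univ_nonempty

theorem stmt8_general {n : ℕ} (I : Set ℝ) (hIopen : IsOpen I)
    (hIconn : I.OrdConnected) (hIne : I.Nonempty) (hIpos : I ⊆ Set.Ioi (0 : ℝ))
    (f f' g g' : ℝ → ℝ)
    (hf : ∀ x ∈ I, HasDerivAt f (f' x) x) (hf'0 : ∀ x ∈ I, f' x ≠ 0)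
    (hg : ∀ x ∈ I, HasDerivAt g (g' x) x) (hg'0 : ∀ x ∈ I, g' x ≠ 0)
    (lam mu : Fin n → ℝ) (al be : Fin n → ℝ)
    (hlam : ∀ i, 0 < lam i) (hmu : ∀ i, 0 < mu i)
    (hloc : LocallySmaller I (bajMean I f (fun i x => lam i * x ^ al i))
      (bajMean I g (fun i x => mu i * x ^ be i))) :
    ∃ γ : ℝ, 0 < γ ∧ ∃ δ : ℝ, ∀ i : Fin n, mu i = γ * lam i ∧ be i = al i + δ := by
  rcases isEmpty_or_nonempty (Fin n) with _ | hne
  · exact ⟨1, one_pos, 0, isEmptyElim⟩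
  obtain ⟨i₀⟩ := id hne
  have hsum {c : Fin n → ℝ} (hc : ∀ i, 0 < c i) (e : Fin n → ℝ) (x : ℝ) (hx : x ∈ I) :
      ∑ j, c j * x ^ e j ≠ 0 := (sum_mul_rpow_pos hc e (hIpos hx)).ne'
  have hdiff (c e : Fin n → ℝ) (i : Fin n) (x : ℝ) (hx : x ∈ I) :
      DifferentiableAt ℝ (fun x => c i * x ^ e i) x := by
    fun_prop (disch := exact (mem_Ioi.1 (hIpos hx)).ne')
  have hratio : ∀ x ∈ I, ∀ i, lam i * x ^ al i / ∑ j, lam j * x ^ al j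
      = mu i * x ^ be i / ∑ j, mu j * x ^ be j := fun x hx =>
    hloc.weight_div_sum_eq hIopen hIconn hf hf'0 hg hg'0 (hdiff lam al) (hdiff mu be)
      (hsum hlam al) (hsum hmu be) hx
  have hI : I.Nontrivial := by
    obtain ⟨a, b, hab, hsub⟩ := hIopen.exists_Ioo_subset hIne
    exact (Ioo_infinite hab).nontrivial.mono hsub
  refine ⟨mu i₀ / lam i₀, div_pos (hmu i₀) (hlam i₀), be i₀ - al i₀, fun i => ?_⟩
  have hcross : ∀ x ∈ I,
      lam i * mu i₀ * x ^ (al i + be i₀) = lam i₀ * mu i * x ^ (al i₀ + be i) := by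
    intro x hx
    rw [rpow_add (hIpos hx), rpow_add (hIpos hx)]
    linear_combination mul_eq_mul_of_div_eq_div_of_div_eq_div (hsum hlam al x hx)
      (hsum hmu be x hx) (hratio x hx i) (hratio x hx i₀)
  obtain ⟨hexp, hcoef⟩ := eq_and_eq_of_forall_mul_rpow_eq hI hIpos
    (mul_pos (hlam i) (hmu i₀)).ne' hcross
  constructor
  · field_simp [(hlam i₀).ne']
    linear_combination -hcoef
  · linarith

/-- Corollary LCp, necessity of the parameter relations: with power weight functions
`pᵢ(x) = λᵢ x^{αᵢ}`, `qᵢ(x) = μᵢ x^{βᵢ}` on `I ⊆ (0,∞)`, if `A_{f,p}` is locally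
smaller than `A_{g,q}`, then there exist `γ > 0` and `δ ∈ ℝ` with `μᵢ = γλᵢ` and
`βᵢ = αᵢ + δ` for all `i`. -/
theorem stmt8 {n : ℕ} (hn : 2 ≤ n) (I : Set ℝ) (hIopen : IsOpen I)
    (hIconn : I.OrdConnected) (hIne : I.Nonempty) (hIpos : I ⊆ Set.Ioi (0 : ℝ))
    (f f' g g' : ℝ → ℝ)
    (hf : ∀ x ∈ I, HasDerivAt f (f' x) x) (hf'0 : ∀ x ∈ I, f' x ≠ 0)
    (hg : ∀ x ∈ I, HasDerivAt g (g' x) x) (hg'0 : ∀ x ∈ I, g' x ≠ 0)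
    (lam mu : Fin n → ℝ) (al be : Fin n → ℝ)
    (hlam : ∀ i, 0 < lam i) (hmu : ∀ i, 0 < mu i)
    (hloc : LocallySmaller I (bajMean I f (fun i x => lam i * x ^ al i))
      (bajMean I g (fun i x => mu i * x ^ be i))) :
    ∃ γ : ℝ, 0 < γ ∧ ∃ δ : ℝ, ∀ i : Fin n, mu i = γ * lam i ∧ be i = al i + δ :=
  stmt8_general I hIopen hIconn hIne hIpos f f' g g' hf hf'0 hg hg'0 lam mu al be hlam hmu hloc
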